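/- Let C be an additive category, X a covariantly finite subcategory such that every left X-approximation has a special n-cokernel with respect to X. Then there is a well-defined additive endofunctor Σ on the quotient category C/X, defined on objects by Σ A = B where A → X_1 → ⋯ → X_n → B is a chosen right n-exact sequence with A → X_1 a left X-approximation and all X_i ∈ X, and on morphisms by lifting along the approximations; the assignment on morphisms is independent of the chosen lift modulo morphisms factoring through X. -/

import Mathlib

open CategoryTheory Limits

universe v u

variable {C : Type u} [Category.{v} C]

section Defs
variable [Preadditive C]

/-- `g` is a weak cokernel of `f`: `g ∘ f = 0` and every morphism killing `f`
factors (not necessarily uniquely) through `g`. -/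
def IsWeakCokernel {A B X : C} (f : A ⟶ B) (g : B ⟶ X) : Prop :=
  f ≫ g = 0 ∧ ∀ ⦃D : C⦄ (h : B ⟶ D), f ≫ h = 0 → ∃ k : X ⟶ D, h = g ≫ k

/-- `g` is a cokernel of `f`. -/
def IsCokernelOf {A B X : C} (f : A ⟶ B) (g : B ⟶ X) : Prop :=
  f ≫ g = 0 ∧ ∀ ⦃D : C⦄ (h : B ⟶ D), f ≫ h = 0 → ∃! k : X ⟶ D, h = g ≫ k

/-- `f` is a weak kernel of `g`. -/
def IsWeakKernel {A B X : C} (g : B ⟶ X) (f : A ⟶ B) : Prop :=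
  f ≫ g = 0 ∧ ∀ ⦃D : C⦄ (h : D ⟶ B), h ≫ g = 0 → ∃ k : D ⟶ A, h = k ≫ f

/-- `f` is a kernel of `g`. -/
def IsKernelOf {A B X : C} (g : B ⟶ X) (f : A ⟶ B) : Prop :=
  f ≫ g = 0 ∧ ∀ ⦃D : C⦄ (h : D ⟶ B), h ≫ g = 0 → ∃! k : D ⟶ A, h = k ≫ f

/-- The sequence `X 0 → X 1 → ⋯ → X (n+1)` is right `n`-exact, i.e.
`(d 1, …, d n)` is an `n`-cokernel of `d 0`: each `d (k+1)` with `k + 2 ≤ n` is a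
weak cokernel of `d k`, and `d n` is a cokernel of `d (n-1)`. -/
def IsRightNExactSeq (n : ℕ) (X : ℕ → C) (d : ∀ i, X i ⟶ X (i + 1)) : Prop :=
  (∀ k, k + 2 ≤ n → IsWeakCokernel (d k) (d (k + 1))) ∧ IsCokernelOf (d (n - 1)) (d (n - 1 + 1))

/-- The sequence `X 0 → X 1 → ⋯ → X (n+1)` is left `n`-exact. -/
def IsLeftNExactSeq (n : ℕ) (X : ℕ → C) (d : ∀ i, X i ⟶ X (i + 1)) : Prop :=
  (∀ k, k + 2 ≤ n → IsWeakKernel (d (k + 1)) (d k)) ∧ IsKernelOf (d 1) (d 0)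

/-- `f : A ⟶ B` is `X`-monic with respect to the subcategory given by the predicate `P`:
every morphism from `A` to an object of `P` factors through `f`. -/
def XMonic (P : C → Prop) {A B : C} (f : A ⟶ B) : Prop :=
  ∀ ⦃M : C⦄, P M → ∀ g : A ⟶ M, ∃ h : B ⟶ M, g = f ≫ h

/-- `f` is `X`-epic. -/
def XEpic (P : C → Prop) {A B : C} (f : A ⟶ B) : Prop :=
  ∀ ⦃M : C⦄, P M → ∀ g : M ⟶ B, ∃ h : M ⟶ A, g = h ≫ f

/-- `(-1)^k • f`. -/
def psign (k : ℕ) {A B : C} (f : A ⟶ B) : A ⟶ B := if Even k then f else -f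

/-- `f : A ⟶ B` has an `n`-cokernel. -/
def HasNCokernel (n : ℕ) {A B : C} (f : A ⟶ B) : Prop :=
  ∃ (X : ℕ → C) (d : ∀ i, X i ⟶ X (i + 1)) (e0 : X 0 = A) (e1 : X 1 = B),
    d 0 = eqToHom e0 ≫ f ≫ eqToHom e1.symm ∧ IsRightNExactSeq n X d

/-- `f : A ⟶ B` has a special `n`-cokernel with respect to `P`: an `n`-cokernel all of whose
intermediate objects lie in `P`. -/
def HasSpecialNCokernel (P : C → Prop) (n : ℕ) {A B : C} (f : A ⟶ B) : Prop :=
  ∃ (X : ℕ → C) (d : ∀ i, X i ⟶ X (i + 1)) (e0 : X 0 = A) (e1 : X 1 = B),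
    d 0 = eqToHom e0 ≫ f ≫ eqToHom e1.symm ∧ IsRightNExactSeq n X d ∧
    ∀ i, 2 ≤ i → i ≤ n → P (X i)

end Defs

section QuotCat
variable [Preadditive C]

/-- Morphisms factoring through an object of the subcategory `P`. -/
def xSet (P : C → Prop) (A B : C) : Set (A ⟶ B) :=
  {f | ∃ (M : C) (u : A ⟶ M) (v : M ⟶ B), P M ∧ f = u ≫ v}

/-- The ideal `[X](A,B)` of morphisms factoring through `P`, as an additive subgroup
(when `P` is closed under finite direct sums this is just `xSet P A B`). -/
def xSub (P : C → Prop) (A B : C) : AddSubgroup (A ⟶ B) :=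
  AddSubgroup.closure (xSet P A B)

lemma xSub_comp_left (P : C → Prop) {A B C' : C} {f : A ⟶ B} (hf : f ∈ xSub P A B)
    (g : B ⟶ C') : f ≫ g ∈ xSub P A C' := by
  induction hf using AddSubgroup.closure_induction with
  | mem x hx =>
      obtain ⟨M, u, v, hM, rfl⟩ := hx
      exact AddSubgroup.subset_closure ⟨M, u, v ≫ g, hM, by simp⟩
  | zero => simpa using (xSub P A C').zero_mem
  | add x y _ _ hx hy => simpa [Preadditive.add_comp] using (xSub P A C').add_mem hx hy
  | neg x _ hx => simpa [Preadditive.neg_comp] using (xSub P A C').neg_mem hx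

lemma xSub_comp_right (P : C → Prop) {A B C' : C} (g : A ⟶ B) {f : B ⟶ C'}
    (hf : f ∈ xSub P B C') : g ≫ f ∈ xSub P A C' := by
  induction hf using AddSubgroup.closure_induction with
  | mem x hx =>
      obtain ⟨M, u, v, hM, rfl⟩ := hx
      exact AddSubgroup.subset_closure ⟨M, g ≫ u, v, hM, by simp⟩
  | zero => simpa using (xSub P A C').zero_mem
  | add x y _ _ hx hy => simpa [Preadditive.comp_add] using (xSub P A C').add_mem hx hy
  | neg x _ hx => simpa [Preadditive.comp_neg] using (xSub P A C').neg_mem hx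

/-- The quotient category `C/X`: same objects as `C`. -/
structure QObj (P : C → Prop) : Type u where
  obj : C

variable (P : C → Prop)

instance QObj.category : Category.{v} (QObj P) where
  Hom A B := (A.obj ⟶ B.obj) ⧸ xSub P A.obj B.obj
  id A := QuotientAddGroup.mk (𝟙 A.obj)
  comp {A B C'} x y :=
    Quotient.liftOn₂ x y (fun a b => QuotientAddGroup.mk (a ≫ b)) (by
      intro a b a' b' ha hb
      have ha' : -a + a' ∈ xSub P _ _ := QuotientAddGroup.leftRel_apply.mp ha
      have hb' : -b + b' ∈ xSub P _ _ := QuotientAddGroup.leftRel_apply.mp hb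
      apply Quotient.sound
      refine QuotientAddGroup.leftRel_apply.mpr ?_
      have : -(a ≫ b) + a' ≫ b' = (-a + a') ≫ b + a' ≫ (-b + b') := by
        simp only [Preadditive.add_comp, Preadditive.comp_add, Preadditive.neg_comp, Preadditive.comp_neg]
        abel
      rw [this]
      exact AddSubgroup.add_mem _ (xSub_comp_left P ha' b) (xSub_comp_right P a' hb'))
  id_comp x := by
    induction x using Quotient.inductionOn with
    | h a => exact congrArg QuotientAddGroup.mk (Category.id_comp a)
  comp_id x := by
    induction x using Quotient.inductionOn with
    | h a => exact congrArg QuotientAddGroup.mk (Category.comp_id a)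
  assoc x y z := by
    induction x using Quotient.inductionOn with
    | h a =>
      induction y using Quotient.inductionOn with
      | h b =>
        induction z using Quotient.inductionOn with
        | h c => exact congrArg QuotientAddGroup.mk (Category.assoc a b c)

instance QObj.preadditive : Preadditive (QObj P) where
  homGroup A B := inferInstanceAs (AddCommGroup ((A.obj ⟶ B.obj) ⧸ xSub P A.obj B.obj))
  add_comp A B C' x x' y := by
    induction x using Quotient.inductionOn with
    | h a =>
      induction x' using Quotient.inductionOn with
      | h a' =>
        induction y using Quotient.inductionOn with
        | h b => exact congrArg QuotientAddGroup.mk (Preadditive.add_comp _ _ _ a a' b)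
  comp_add A B C' x y y' := by
    induction x using Quotient.inductionOn with
    | h a =>
      induction y using Quotient.inductionOn with
      | h b =>
        induction y' using Quotient.inductionOn with
        | h b' => exact congrArg QuotientAddGroup.mk (Preadditive.comp_add _ _ _ a b b')

/-- The quotient functor `C ⥤ C/X`. -/
def toQ : C ⥤ QObj P where
  obj A := ⟨A⟩
  map f := QuotientAddGroup.mk f
  map_id _ := rfl
  map_comp _ _ := rfl

/-- Image of an object of `C` in `C/X`. -/
abbrev qObj (A : C) : QObj P := ⟨A⟩

/-- Image of a morphism of `C` in `C/X`. -/
abbrev qMap {A B : C} (f : A ⟶ B) : qObj P A ⟶ qObj P B := QuotientAddGroup.mk f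

open ZeroObject in
instance [HasZeroObject C] : HasZeroObject (QObj P) := by
  refine ⟨qObj P 0, ?_⟩
  rw [IsZero.iff_id_eq_zero]
  have h : (𝟙 (qObj P 0)) = qMap P (𝟙 (0 : C)) := rfl
  rw [h, show (𝟙 (0 : C)) = 0 from by simp]
  exact QuotientAddGroup.mk_zero (xSub P 0 0)

instance [HasBinaryBiproducts C] : HasBinaryBiproducts (QObj P) where
  has_binary_biproduct A B := by
    refine HasBinaryBiproduct.mk ⟨?_, ?_⟩
    · exact
        { pt := qObj P (A.obj ⊞ B.obj)
          fst := qMap P biprod.fst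
          snd := qMap P biprod.snd
          inl := qMap P biprod.inl
          inr := qMap P biprod.inr
          inl_fst := congrArg (QuotientAddGroup.mk) biprod.inl_fst
          inl_snd := congrArg (QuotientAddGroup.mk) biprod.inl_snd
          inr_fst := congrArg (QuotientAddGroup.mk) biprod.inr_fst
          inr_snd := congrArg (QuotientAddGroup.mk) biprod.inr_snd }
    · apply isBinaryBilimitOfTotal
      show qMap P biprod.fst ≫ qMap P biprod.inl + qMap P biprod.snd ≫ qMap P biprod.inr = qMap P (𝟙 _)
      show qMap P (biprod.fst ≫ biprod.inl) + qMap P (biprod.snd ≫ biprod.inr) = _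
      rw [show qMap P (biprod.fst ≫ biprod.inl) + qMap P (biprod.snd ≫ biprod.inr)
            = qMap P (biprod.fst ≫ biprod.inl + biprod.snd ≫ biprod.inr) from rfl]
      exact congrArg QuotientAddGroup.mk biprod.total

end QuotCat

/-!
Lifts of `φ : A ⟶ A'` along the chosen sequences exist because `A → X A 1` is a left
`X`-approximation and each later map is a weak cokernel of the previous one. If `φ` factors
through `X`, its degree-`0` component factors through the approximation `A → X A 1`; this
factorization extends to a null-homotopy of the lift, and its last step, together with the
fact that `X A n → X A (n + 1)` is epic, shows that the component at `n + 1` factors through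
`X A' n ∈ X`. Applied to differences of lifts, this makes `Σ` well defined, functorial and
additive.
-/

section Exactness
variable [Preadditive C]

lemma IsCokernelOf.isWeakCokernel {A B Y : C} {f : A ⟶ B} {g : B ⟶ Y}
    (h : IsCokernelOf f g) : IsWeakCokernel f g :=
  ⟨h.1, fun _ k hk => (h.2 k hk).exists⟩

lemma IsCokernelOf.epi {A B Y : C} {f : A ⟶ B} {g : B ⟶ Y} (h : IsCokernelOf f g) : Epi g :=
  ⟨fun u v huv =>
    (h.2 (g ≫ u) (by rw [← Category.assoc, h.1, zero_comp])).unique rfl huv⟩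

variable {n : ℕ} {X : ℕ → C} {d : ∀ i, X i ⟶ X (i + 1)}

lemma IsRightNExactSeq.isWeakCokernel (h : IsRightNExactSeq n X d) {k : ℕ} (hk : k + 1 ≤ n) :
    IsWeakCokernel (d k) (d (k + 1)) := by
  by_cases hk' : k + 2 ≤ n
  · exact h.1 k hk'
  · obtain rfl : k = n - 1 := by omega
    exact h.2.isWeakCokernel

lemma IsRightNExactSeq.comp_eq_zero (h : IsRightNExactSeq n X d) {k : ℕ} (hk : k + 1 ≤ n) :
    d k ≫ d (k + 1) = 0 :=
  (h.isWeakCokernel hk).1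

lemma IsRightNExactSeq.epi_last (h : IsRightNExactSeq n X d) (hn : 1 ≤ n) : Epi (d n) := by
  obtain ⟨m, rfl⟩ : ∃ m, n = m + 1 := ⟨n - 1, by omega⟩
  exact h.2.epi

end Exactness

section ChainMaps
variable {n : ℕ} {XA XB XC : ℕ → C}
  {dA : ∀ i, XA i ⟶ XA (i + 1)} {dB : ∀ i, XB i ⟶ XB (i + 1)} {dC : ∀ i, XC i ⟶ XC (i + 1)}

variable (n dA dB) in
def IsChainMapUpTo (x : ∀ i, XA i ⟶ XB i) : Prop :=
  ∀ i ≤ n, dA i ≫ x (i + 1) = x i ≫ dB i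

lemma isChainMapUpTo_id : IsChainMapUpTo n dA dA fun i => 𝟙 (XA i) := fun i _ => by simp

lemma IsChainMapUpTo.comp {x : ∀ i, XA i ⟶ XB i} {z : ∀ i, XB i ⟶ XC i}
    (hx : IsChainMapUpTo n dA dB x) (hz : IsChainMapUpTo n dB dC z) :
    IsChainMapUpTo n dA dC fun i => x i ≫ z i := fun i hi => by
  rw [reassoc_of% hx i hi, hz i hi, Category.assoc]

variable [Preadditive C]

namespace IsChainMapUpTo

variable {x y : ∀ i, XA i ⟶ XB i}

lemma add (hx : IsChainMapUpTo n dA dB x) (hy : IsChainMapUpTo n dA dB y) :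
    IsChainMapUpTo n dA dB (x + y) := fun i hi => by
  simp only [Pi.add_apply, Preadditive.comp_add, Preadditive.add_comp, hx i hi, hy i hi]

lemma sub (hx : IsChainMapUpTo n dA dB x) (hy : IsChainMapUpTo n dA dB y) :
    IsChainMapUpTo n dA dB (x - y) := fun i hi => by
  simp only [Pi.sub_apply, Preadditive.comp_sub, Preadditive.sub_comp, hx i hi, hy i hi]

end IsChainMapUpTo

variable (P : C → Prop)

lemma exists_isChainMapUpTo (hA : IsRightNExactSeq n XA dA) (hB : IsRightNExactSeq n XB dB)
    (hmono : XMonic P (dA 0)) (hB₁ : P (XB 1)) (x₀ : XA 0 ⟶ XB 0) :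
    ∃ x : ∀ i, XA i ⟶ XB i, x 0 = x₀ ∧ IsChainMapUpTo n dA dB x := by
  suffices ∀ k ≤ n + 1, ∃ x : ∀ i, XA i ⟶ XB i, x 0 = x₀ ∧ ∀ i < k, dA i ≫ x (i + 1) = x i ≫ dB i by
    obtain ⟨x, hx₀, hx⟩ := this (n + 1) le_rfl
    exact ⟨x, hx₀, fun i hi => hx i (by omega)⟩
  intro k hk
  induction k with
  | zero => exact ⟨Function.update 0 0 x₀, Function.update_self .., by simp⟩
  | succ k ih =>
    obtain ⟨x, hx₀, hx⟩ := ih (by omega)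
    obtain ⟨w, hw⟩ : ∃ w, dA k ≫ w = x k ≫ dB k := by
      cases k with
      | zero => obtain ⟨w, hw⟩ := hmono hB₁ (x 0 ≫ dB 0); exact ⟨w, hw.symm⟩
      | succ j =>
        have hkill : dA j ≫ x (j + 1) ≫ dB (j + 1) = 0 := by
          rw [reassoc_of% hx j (by omega), hB.comp_eq_zero (by omega), comp_zero]
        obtain ⟨w, hw⟩ := (hA.isWeakCokernel (by omega)).2 _ hkill
        exact ⟨w, hw.symm⟩
    refine ⟨Function.update x (k + 1) w, by simpa using hx₀, fun i hi => ?_⟩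
    rcases Nat.lt_succ_iff_lt_or_eq.mp hi with hi | rfl
    · rw [Function.update_of_ne (by omega), Function.update_of_ne (by omega), hx i hi]
    · rw [Function.update_self, Function.update_of_ne (by omega), hw]

/-- The factorization of `z 0` through `dA 0` extends to a null-homotopy of `z`. -/
lemma IsChainMapUpTo.exists_eq_comp_last (hA : IsRightNExactSeq n XA dA)
    (hB : IsRightNExactSeq n XB dB) (hn : 1 ≤ n) {z : ∀ i, XA i ⟶ XB i}
    (hz : IsChainMapUpTo n dA dB z) {s : XA 1 ⟶ XB 0} (hs : z 0 = dA 0 ≫ s) :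
    ∃ h : XA (n + 1) ⟶ XB n, z (n + 1) = h ≫ dB n := by
  have homotopy : ∀ k ≤ n, ∃ h : XA (k + 1) ⟶ XB k, dA k ≫ (z (k + 1) - h ≫ dB k) = 0 := by
    intro k hk
    induction k with
    | zero => exact ⟨s, by rw [Preadditive.comp_sub, hz 0 hk, hs, Category.assoc, sub_self]⟩
    | succ k ih =>
      obtain ⟨h, hh⟩ := ih (by omega)
      obtain ⟨h', hh'⟩ := (hA.isWeakCokernel hk).2 _ hh
      refine ⟨h', ?_⟩
      rw [Preadditive.comp_sub, hz (k + 1) hk, ← Category.assoc, ← hh', Preadditive.sub_comp,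
        Category.assoc, hB.comp_eq_zero hk, comp_zero, sub_zero, sub_self]
  obtain ⟨h, hh⟩ := homotopy n le_rfl
  exact ⟨h, sub_eq_zero.mp ((hA.epi_last hn).left_cancellation _ _ (hh.trans comp_zero.symm))⟩

lemma exists_eq_comp_of_mem_xSub {A A₁ B : C} {f : A ⟶ A₁} (hf : XMonic P f) {g : A ⟶ B}
    (hg : g ∈ xSub P A B) : ∃ s : A₁ ⟶ B, g = f ≫ s := by
  induction hg using AddSubgroup.closure_induction with
  | mem g hg =>
    obtain ⟨M, u, v, hM, rfl⟩ := hg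
    obtain ⟨t, rfl⟩ := hf hM u
    exact ⟨t ≫ v, Category.assoc _ _ _⟩
  | zero => exact ⟨0, comp_zero.symm⟩
  | add g g' _ _ ih ih' =>
    obtain ⟨s, rfl⟩ := ih
    obtain ⟨s', rfl⟩ := ih'
    exact ⟨s + s', (Preadditive.comp_add _ _ _ _ _ _).symm⟩
  | neg g _ ih =>
    obtain ⟨s, rfl⟩ := ih
    exact ⟨-s, (Preadditive.comp_neg _ _).symm⟩

lemma IsChainMapUpTo.last_mem_xSub (hA : IsRightNExactSeq n XA dA)
    (hB : IsRightNExactSeq n XB dB) (hn : 1 ≤ n) (hmono : XMonic P (dA 0)) (hBn : P (XB n))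
    {z : ∀ i, XA i ⟶ XB i} (hz : IsChainMapUpTo n dA dB z) (hz₀ : z 0 ∈ xSub P (XA 0) (XB 0)) :
    z (n + 1) ∈ xSub P (XA (n + 1)) (XB (n + 1)) := by
  obtain ⟨s, hs⟩ := exists_eq_comp_of_mem_xSub P hmono hz₀
  obtain ⟨h, hh⟩ := hz.exists_eq_comp_last hA hB hn hs
  exact AddSubgroup.subset_closure ⟨XB n, h, dB n, hBn, hh⟩

end ChainMaps

section Sigma
variable [Preadditive C]

lemma qMap_eq_qMap_iff (P : C → Prop) {A B : C} {f g : A ⟶ B} :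
    qMap P f = qMap P g ↔ f - g ∈ xSub P A B :=
  QuotientAddGroup.eq_iff_sub_mem

structure ApproximationSequences (P : C → Prop) (n : ℕ) where
  X : C → ℕ → C
  d : ∀ A i, X A i ⟶ X A (i + 1)
  X_zero : ∀ A, X A 0 = A
  isRightNExactSeq : ∀ A, IsRightNExactSeq n (X A) (d A)
  prop_X : ∀ A i, 1 ≤ i → i ≤ n → P (X A i)
  xMonic : ∀ A, XMonic P (d A 0)

namespace ApproximationSequences

variable {P : C → Prop} {n : ℕ} (S : ApproximationSequences P n)

def IsLift {A B : C} (f : A ⟶ B) (x : ∀ i, S.X A i ⟶ S.X B i) : Prop :=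
  x 0 = eqToHom (S.X_zero A) ≫ f ≫ eqToHom (S.X_zero B).symm ∧ IsChainMapUpTo n (S.d A) (S.d B) x

variable {S}

lemma isLift_id (A : C) : S.IsLift (𝟙 A) fun i => 𝟙 (S.X A i) :=
  ⟨by simp, isChainMapUpTo_id⟩

lemma IsLift.add {A B : C} {f g : A ⟶ B} {x y : ∀ i, S.X A i ⟶ S.X B i} (hx : S.IsLift f x)
    (hy : S.IsLift g y) : S.IsLift (f + g) (x + y) :=
  ⟨by simp [hx.1, hy.1], hx.2.add hy.2⟩

lemma IsLift.comp {A B B' : C} {f : A ⟶ B} {g : B ⟶ B'} {x : ∀ i, S.X A i ⟶ S.X B i}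
    {y : ∀ i, S.X B i ⟶ S.X B' i} (hx : S.IsLift f x) (hy : S.IsLift g y) :
    S.IsLift (f ≫ g) fun i => x i ≫ y i :=
  ⟨by simp [hx.1, hy.1], hx.2.comp hy.2⟩

lemma qMap_last_eq (hn : 1 ≤ n) {A B : C} {f g : A ⟶ B} {x y : ∀ i, S.X A i ⟶ S.X B i}
    (hx : S.IsLift f x) (hy : S.IsLift g y) (hfg : qMap P f = qMap P g) :
    qMap P (x (n + 1)) = qMap P (y (n + 1)) := by
  rw [qMap_eq_qMap_iff] at hfg ⊢
  have h₀ : (x - y) 0 ∈ xSub P (S.X A 0) (S.X B 0) := by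
    rw [Pi.sub_apply, hx.1, hy.1, ← Preadditive.comp_sub, ← Preadditive.sub_comp]
    exact xSub_comp_right P _ (xSub_comp_left P hfg _)
  exact (hx.2.sub hy.2).last_mem_xSub P (S.isRightNExactSeq A) (S.isRightNExactSeq B) hn
    (S.xMonic A) (S.prop_X B n hn le_rfl) h₀

variable (S)

lemma exists_isLift (hn : 1 ≤ n) {A B : C} (f : A ⟶ B) : ∃ x, S.IsLift f x :=
  exists_isChainMapUpTo P (S.isRightNExactSeq A) (S.isRightNExactSeq B) (S.xMonic A)
    (S.prop_X B 1 le_rfl hn) _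

noncomputable def lift (hn : 1 ≤ n) {A B : C} (f : A ⟶ B) : ∀ i, S.X A i ⟶ S.X B i :=
  (S.exists_isLift hn f).choose

lemma isLift_lift (hn : 1 ≤ n) {A B : C} (f : A ⟶ B) : S.IsLift f (S.lift hn f) :=
  (S.exists_isLift hn f).choose_spec

noncomputable def sigma (hn : 1 ≤ n) : QObj P ⥤ QObj P where
  obj A := qObj P (S.X A.obj (n + 1))
  map φ := Quotient.liftOn φ (fun f => qMap P (S.lift hn f (n + 1)))
    fun f g hfg => qMap_last_eq hn (S.isLift_lift hn f) (S.isLift_lift hn g) (Quotient.sound hfg)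
  map_id A := qMap_last_eq hn (S.isLift_lift hn _) (isLift_id A.obj) rfl
  map_comp φ ψ := by
    induction φ using Quotient.inductionOn
    induction ψ using Quotient.inductionOn
    exact qMap_last_eq hn (S.isLift_lift hn _)
      ((S.isLift_lift hn _).comp (S.isLift_lift hn _)) rfl

lemma sigma_map_qMap (hn : 1 ≤ n) {A B : C} {f : A ⟶ B} {x : ∀ i, S.X A i ⟶ S.X B i}
    (hx : S.IsLift f x) : (S.sigma hn).map (qMap P f) = qMap P (x (n + 1)) :=
  qMap_last_eq hn (S.isLift_lift hn f) hx rfl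

instance sigma_additive (hn : 1 ≤ n) : (S.sigma hn).Additive where
  map_add {_ _ φ ψ} := by
    induction φ using Quotient.inductionOn
    induction ψ using Quotient.inductionOn
    exact qMap_last_eq hn (S.isLift_lift hn _)
      ((S.isLift_lift hn _).add (S.isLift_lift hn _)) rfl

end ApproximationSequences

end Sigma

theorem sigma_functor_exists_general
    [Preadditive C]
    (P : C → Prop) (n : ℕ) (hn : 1 ≤ n)
    -- the chosen sequences
    (XX : C → ℕ → C) (dd : ∀ A i, XX A i ⟶ XX A (i + 1)) (eX : ∀ A : C, XX A 0 = A)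
    (hXexact : ∀ A, IsRightNExactSeq n (XX A) (dd A))
    (hXP : ∀ A i, 1 ≤ i → i ≤ n → P (XX A i))
    (hXmono : ∀ A, XMonic P (dd A 0)) :
    ∃ (S : QObj P ⥤ QObj P) (hobj : ∀ A : C, S.obj (qObj P A) = qObj P (XX A (n + 1))),
      S.Additive ∧
      ∀ (A A' : C) (φ : A ⟶ A') (x : ∀ i, XX A i ⟶ XX A' i),
        x 0 = eqToHom (eX A) ≫ φ ≫ eqToHom (eX A').symm →
        (∀ i, dd A i ≫ x (i + 1) = x i ≫ dd A' i) →
        S.map (qMap P φ) = eqToHom (hobj A) ≫ qMap P (x (n + 1)) ≫ eqToHom (hobj A').symm := by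
  let S : ApproximationSequences P n := ⟨XX, dd, eX, hXexact, hXP, hXmono⟩
  refine ⟨S.sigma hn, fun _ => rfl, inferInstance, fun A A' φ x hx₀ hx => ?_⟩
  rw [S.sigma_map_qMap hn ⟨hx₀, fun i _ => hx i⟩]
  exact ((Category.id_comp _).trans (Category.comp_id _)).symm

/-- Proposition 3.1. Let `C` be an additive category and `X` (given by `P`)
a covariantly finite subcategory such that every left `X`-approximation has a special
`n`-cokernel with respect to `X`.  Fix, for every object `A`, a right `n`-exact sequence
`A = XX A 0 → XX A 1 → ⋯ → XX A n → XX A (n+1)` whose first morphism is a left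
`X`-approximation and whose objects `XX A 1, …, XX A n` lie in `X`.
Then there is a well-defined additive endofunctor `Σ` of `C/X` with `Σ A = XX A (n+1)`,
which sends (the class of) `φ : A ⟶ A'` to (the class of) `x (n+1)` for any lift
`x` of `φ` along the chosen sequences. -/
theorem sigma_functor_exists
    [Preadditive C] [HasZeroObject C] [HasFiniteBiproducts C] [HasBinaryBiproducts C]
    (P : C → Prop) (n : ℕ) (hn : 1 ≤ n)
    -- `X` is closed under isomorphisms, direct sums and direct summands
    (hPiso : ∀ {A B : C}, P A → (A ≅ B) → P B)
    (hPsum : ∀ {A B : C}, P A → P B → P (A ⊞ B))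
    (hPsummand : ∀ {A M : C}, P M → ∀ (i : A ⟶ M) (p : M ⟶ A), i ≫ p = 𝟙 A → P A)
    -- `X` is covariantly finite
    (hCov : ∀ A : C, ∃ (M : C) (f : A ⟶ M), P M ∧ XMonic P f)
    -- every left `X`-approximation has a special `n`-cokernel with respect to `X`
    (hSpecial : ∀ {A M : C} (f : A ⟶ M), P M → XMonic P f → HasSpecialNCokernel P n f)
    -- the chosen sequences
    (XX : C → ℕ → C) (dd : ∀ A i, XX A i ⟶ XX A (i + 1)) (eX : ∀ A : C, XX A 0 = A)
    (hXexact : ∀ A, IsRightNExactSeq n (XX A) (dd A))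
    (hXP : ∀ A i, 1 ≤ i → i ≤ n → P (XX A i))
    (hXmono : ∀ A, XMonic P (dd A 0)) :
    ∃ (S : QObj P ⥤ QObj P) (hobj : ∀ A : C, S.obj (qObj P A) = qObj P (XX A (n + 1))),
      S.Additive ∧
      ∀ (A A' : C) (φ : A ⟶ A') (x : ∀ i, XX A i ⟶ XX A' i),
        x 0 = eqToHom (eX A) ≫ φ ≫ eqToHom (eX A').symm →
        (∀ i, dd A i ≫ x (i + 1) = x i ≫ dd A' i) →
        S.map (qMap P φ) = eqToHom (hobj A) ≫ qMap P (x (n + 1)) ≫ eqToHom (hobj A').symm :=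
  sigma_functor_exists_general P n hn XX dd eX hXexact hXP hXmono
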